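/- arXiv:1912.01475 — 2 statements merged into one kernel-verified Lean document; each statement's English description precedes it below -/
import Mathlib

section
/- Define the operators L̃₆,b u = b·u + x·u' and L̃₆,a⁺ u = a·u − (1−x)·u'. Then the composition L̃₆,a⁺ ∘ L̃₆,b applied to P̃_n^{(a-1,b)}(x) yields (n+a)(n+b) · P̃_n^{(a-1,b)}(x); i.e., P̃_n^{(a-1,b)} is an eigenfunction of this second-order differential operator with eigenvalue (n+a)(n+b). -/
/-!
In the variable `y = x - 1` both operators are triangular on the powers of `y`: since
`1 - x = -y`, `L̃₆,a⁺ y^k = (a + k) y^k`, while `L̃₆,b y^(k+1) = (b + k + 1) y^(k+1) + (k + 1) y^k`.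
Their composite is therefore bidiagonal with diagonal `(a + k)(b + k)`. Expanding
`P̃_n^{(a-1,b)} = ∑ c_k y^k`, the ratio `c_{k+1} / c_k` of its coefficients is exactly such that the
off-diagonal part cancels the defect `(n + a)(n + b) - (a + k)(b + k) = (n - k)(a + b + n + k)`.
-/

open Finset Real

/-- Classical Jacobi polynomial `P_n^{(a,b)}(x)` with real parameters. -/
noncomputable def jacobiP (n : ℕ) (a b x : ℝ) : ℝ :=
  (1 / n.factorial) * ∑ k ∈ Finset.range (n + 1),
    (n.choose k : ℝ) * (ascPochhammer ℝ k).eval (a + b + n + 1)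
      * (ascPochhammer ℝ (n - k)).eval (a + k + 1) * ((x - 1) / 2) ^ k

/-- Shifted Jacobi polynomial `P̃_n^{(a,b)}(x) = P_n^{(a,b)}(2x-1)` on `(0,1)`. -/
noncomputable def shiftedJacobi (n : ℕ) (a b x : ℝ) : ℝ :=
  jacobiP n a b (2 * x - 1)

open Polynomial

theorem LinearMap.apply_sum_smul_eq_smul_of_bidiagonal {R M : Type*} [CommRing R]
    [AddCommGroup M] [Module R M] (L : M →ₗ[R] M) (e : ℕ → M) (lam μ c : ℕ → R) (n : ℕ)
    (he_zero : L (e 0) = lam 0 • e 0)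
    (he_succ : ∀ k, L (e (k + 1)) = lam (k + 1) • e (k + 1) + μ k • e k)
    (hc : ∀ k < n, μ k * c (k + 1) = (lam n - lam k) * c k) :
    L (∑ k ∈ Finset.range (n + 1), c k • e k) = lam n • ∑ k ∈ Finset.range (n + 1), c k • e k := by
  have hdiag : ∑ k ∈ Finset.range (n + 1), c k • L (e k)
      = ∑ k ∈ Finset.range (n + 1), lam k • c k • e k
          + ∑ k ∈ Finset.range n, c (k + 1) • μ k • e k := by
    simp only [Finset.sum_range_succ' _ n, he_zero, he_succ, smul_add, Finset.sum_add_distrib,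
      smul_comm (c _) (lam _)]
    abel
  have hsub : ∑ k ∈ Finset.range n, c (k + 1) • μ k • e k
      = ∑ k ∈ Finset.range (n + 1), (lam n - lam k) • c k • e k := by
    rw [Finset.sum_range_succ, sub_self, zero_smul, add_zero]
    refine Finset.sum_congr rfl fun k hk => ?_
    rw [smul_smul, smul_smul, mul_comm, hc k (Finset.mem_range.mp hk)]
  simp only [map_sum, map_smul, hdiag, hsub, ← Finset.sum_add_distrib, Finset.smul_sum]
  exact Finset.sum_congr rfl fun k _ => by rw [← add_smul, add_sub_cancel]

section Operators

variable {R : Type*} [CommRing R]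

/-- The paper's `L̃₆,b u = b u + x u'`, acting on polynomials. -/
noncomputable def shiftedL6 (b : R) : R[X] →ₗ[R] R[X] :=
  b • LinearMap.id + LinearMap.mulLeft R X ∘ₗ derivative

/-- The paper's `L̃₆,a⁺ u = a u - (1 - x) u'`, acting on polynomials. -/
noncomputable def shiftedL6Plus (a : R) : R[X] →ₗ[R] R[X] :=
  a • LinearMap.id - LinearMap.mulLeft R (1 - X) ∘ₗ derivative

theorem shiftedL6_apply (b : R) (p : R[X]) : shiftedL6 b p = b • p + X * derivative p := rfl

theorem shiftedL6Plus_apply (a : R) (p : R[X]) :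
    shiftedL6Plus a p = a • p - (1 - X) * derivative p := rfl

theorem shiftedL6_one (b : R) : shiftedL6 b 1 = b • 1 := by
  simp [shiftedL6_apply]

theorem shiftedL6Plus_one (a : R) : shiftedL6Plus a 1 = a • 1 := by
  simp [shiftedL6Plus_apply]

theorem shiftedL6_X_sub_one_pow_succ (b : R) (k : ℕ) :
    shiftedL6 b ((X - 1) ^ (k + 1))
      = (b + (k + 1)) • (X - 1) ^ (k + 1) + (k + 1 : R) • (X - 1) ^ k := by
  rw [shiftedL6_apply, ← C_1, derivative_X_sub_C_pow]
  simp only [Nat.add_sub_cancel, Nat.cast_add, Nat.cast_one, smul_eq_C_mul, C_add, C_1, map_natCast]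
  ring

theorem shiftedL6Plus_X_sub_one_pow (a : R) (k : ℕ) :
    shiftedL6Plus a ((X - 1) ^ k) = (a + k) • (X - 1) ^ k := by
  rcases k with _ | k
  · simp [shiftedL6Plus_apply]
  · rw [shiftedL6Plus_apply, ← C_1, derivative_X_sub_C_pow]
    simp only [Nat.add_sub_cancel, Nat.cast_add, Nat.cast_one, smul_eq_C_mul, C_add, C_1,
      map_natCast]
    ring

end Operators

section Evaluation

variable {𝕜 : Type*} [NontriviallyNormedField 𝕜]

theorem eval_shiftedL6 (b : 𝕜) (p : 𝕜[X]) (x : 𝕜) :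
    (shiftedL6 b p).eval x = b * p.eval x + x * deriv (fun t => p.eval t) x := by
  simp [shiftedL6_apply, Polynomial.deriv]

theorem eval_shiftedL6Plus (a : 𝕜) (p : 𝕜[X]) (x : 𝕜) :
    (shiftedL6Plus a p).eval x = a * p.eval x - (1 - x) * deriv (fun t => p.eval t) x := by
  simp [shiftedL6Plus_apply, Polynomial.deriv]

end Evaluation

theorem ascPochhammer_succ_eval_left {S : Type*} [CommSemiring S] (m : ℕ) (y : S) :
    (ascPochhammer S (m + 1)).eval y = y * (ascPochhammer S m).eval (y + 1) := by
  simp [ascPochhammer_succ_left, eval_comp]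

noncomputable def shiftedJacobiCoeff (n : ℕ) (α β : ℝ) (k : ℕ) : ℝ :=
  n.choose k * (ascPochhammer ℝ k).eval (α + β + n + 1)
    * (ascPochhammer ℝ (n - k)).eval (α + k + 1) / n.factorial

noncomputable def shiftedJacobiPoly (n : ℕ) (α β : ℝ) : ℝ[X] :=
  ∑ k ∈ Finset.range (n + 1), shiftedJacobiCoeff n α β k • (X - 1) ^ k

theorem eval_shiftedJacobiPoly (n : ℕ) (α β x : ℝ) :
    (shiftedJacobiPoly n α β).eval x = shiftedJacobi n α β x := by
  rw [shiftedJacobiPoly, eval_finsetSum, shiftedJacobi, jacobiP, Finset.mul_sum]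
  refine Finset.sum_congr rfl fun k _ => ?_
  rw [eval_smul, eval_pow, eval_sub, eval_X, eval_one, smul_eq_mul, shiftedJacobiCoeff,
    show (2 * x - 1 - 1) / 2 = x - 1 by ring]
  ring

theorem shiftedJacobiCoeff_succ (n : ℕ) (α β : ℝ) {k : ℕ} (hk : k < n) :
    (k + 1) * (α + k + 1) * shiftedJacobiCoeff n α β (k + 1)
      = (n - k) * (α + β + n + k + 1) * shiftedJacobiCoeff n α β k := by
  obtain ⟨m, rfl⟩ : ∃ m, n = k + (m + 1) := ⟨n - k - 1, by omega⟩
  have hchoose : ((k + (m + 1)).choose (k + 1) : ℝ) * (k + 1)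
      = ((k + (m + 1)).choose k : ℝ) * (m + 1) := by
    exact_mod_cast (Nat.choose_succ_right_eq (k + (m + 1)) k).trans (by congr 1; omega)
  rw [shiftedJacobiCoeff, shiftedJacobiCoeff, show k + (m + 1) - k = m + 1 by omega,
    show k + (m + 1) - (k + 1) = m by omega, ascPochhammer_succ_eval k,
    ascPochhammer_succ_eval_left m]
  push_cast
  rw [show α + (k + 1) + 1 = α + k + 1 + 1 by ring]
  field_simp
  linear_combination (ascPochhammer ℝ k).eval (α + β + (k + (m + 1)) + 1)
    * (ascPochhammer ℝ m).eval (α + k + 1 + 1) * (α + k + 1)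
    * (α + β + (k + (m + 1)) + 1 + k) * hchoose

theorem shiftedL6Plus_shiftedL6_shiftedJacobiPoly (n : ℕ) (a b : ℝ) :
    shiftedL6Plus a (shiftedL6 b (shiftedJacobiPoly n (a - 1) b))
      = ((n + a) * (n + b)) • shiftedJacobiPoly n (a - 1) b := by
  rw [shiftedJacobiPoly, ← LinearMap.comp_apply]
  refine (shiftedL6Plus a ∘ₗ shiftedL6 b).apply_sum_smul_eq_smul_of_bidiagonal
    (fun k => (X - 1) ^ k) (fun k => (k + a) * (k + b)) (fun k => (k + 1) * (a + k)) _ n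
    ?_ (fun k => ?_) (fun k hk => ?_)
  · simp [shiftedL6_one, shiftedL6Plus_one, smul_smul, mul_comm]
  · simp only [LinearMap.comp_apply, shiftedL6_X_sub_one_pow_succ, map_add, map_smul,
      shiftedL6Plus_X_sub_one_pow, smul_smul]
    push_cast
    congr 2
    ring
  · linear_combination shiftedJacobiCoeff_succ n (a - 1) b hk

theorem shiftedJacobi_L6_eigen (n : ℕ) (a b : ℝ) (x : ℝ) :
    a * (b * shiftedJacobi n (a - 1) b x
          + x * deriv (fun t => shiftedJacobi n (a - 1) b t) x)
      - (1 - x) * deriv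
          (fun t => b * shiftedJacobi n (a - 1) b t
            + t * deriv (fun s => shiftedJacobi n (a - 1) b s) t) x
      = (n + a) * (n + b) * shiftedJacobi n (a - 1) b x := by
  simp only [← eval_shiftedJacobiPoly, ← eval_shiftedL6, ← eval_shiftedL6Plus,
    shiftedL6Plus_shiftedL6_shiftedJacobiPoly, eval_smul, smul_eq_mul]
end

section
/- The three-variable Koornwinder-type polynomial u = P_{n₁,n₂,n₃}^{(α,β,γ,δ,a,b)}(x,y,z) satisfies the second-order partial differential equation z(1−x−y−z)·u_{zz} + [(γ+1)(1−x−y−z) − (δ+1)z]·u_z + n₃(n₃+γ+δ+1)·u = 0. -/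
open Finset Real

/-- Six-parameter Koornwinder-type polynomial in three variables. -/
noncomputable def koornwinder3 (n1 n2 n3 : ℕ) (α β γ δ a b : ℝ) (x y z : ℝ) : ℝ :=
  jacobiP n1 (β + γ + δ + a + b + 2 * n2 + 2 * n3 + 2) α (2 * x - 1)
    * (1 - x) ^ n2
    * jacobiP n2 (γ + δ + 2 * n3 + b + 1) β (2 * y / (1 - x) - 1)
    * (1 - x - y) ^ n3
    * jacobiP n3 δ γ (2 * z / (1 - x - y) - 1)

/-!
In `koornwinder3` only the last factor depends on `z`: with `s = 1 - x - y` the polynomial is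
`K · R (z / s)`, where `R w = P_{n₃}^{(δ,γ)}(2w - 1)` is a shifted Jacobi polynomial. The equation
in `z` is therefore the hypergeometric equation
`w (1 - w) R'' + ((γ + 1)(1 - w) - (δ + 1) w) R' + n₃ (n₃ + γ + δ + 1) R = 0`
rescaled by `w = z / s`. That equation is checked on coefficients in powers of `w - 1`, where it
reduces to the two-term recurrence satisfied by the coefficients of the explicit sum defining `P_n`.
-/

open Polynomial

noncomputable def jacobiCoeff (n : ℕ) (a b : ℝ) (k : ℕ) : ℝ :=
  n.choose k * (ascPochhammer ℝ k).eval (a + b + n + 1)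
    * (ascPochhammer ℝ (n - k)).eval (a + k + 1) / n.factorial

lemma jacobiCoeff_eq_zero_of_lt {n k : ℕ} (a b : ℝ) (h : n < k) : jacobiCoeff n a b k = 0 := by
  simp [jacobiCoeff, Nat.choose_eq_zero_of_lt h]

lemma jacobiCoeff_succ (n : ℕ) (a b : ℝ) (k : ℕ) :
    (k + 1) * (k + a + 1) * jacobiCoeff n a b (k + 1)
      = (n - k) * (n + k + a + b + 1) * jacobiCoeff n a b k := by
  rcases lt_or_ge k n with hk | hk
  · obtain ⟨m, rfl⟩ := Nat.exists_eq_add_of_lt hk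
    have hchoose : ((k + m + 1).choose (k + 1) : ℝ) * (k + 1) = (k + m + 1).choose k * (m + 1) := by
      exact_mod_cast (Nat.choose_succ_right_eq (k + m + 1) k).trans (by congr 1; omega)
    have hpoch : (ascPochhammer ℝ (m + 1)).eval (a + k + 1)
        = (a + k + 1) * (ascPochhammer ℝ m).eval (a + (k + 1 : ℕ) + 1) := by
      rw [ascPochhammer_succ_left, eval_mul, eval_X, eval_comp, eval_add, eval_X, eval_one]
      push_cast; ring_nf
    simp only [jacobiCoeff, show k + m + 1 - k = m + 1 by omega,
      show k + m + 1 - (k + 1) = m by omega, ascPochhammer_succ_eval, hpoch]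
    push_cast
    linear_combination (k + a + 1) * (a + b + (k + m + 1) + 1 + k)
      * (ascPochhammer ℝ k).eval (a + b + (k + m + 1) + 1)
      * (ascPochhammer ℝ m).eval (a + (k + 1) + 1) / (k + m + 1).factorial * hchoose
  · rw [jacobiCoeff_eq_zero_of_lt a b (Nat.lt_succ_of_le hk)]
    rcases hk.eq_or_lt with rfl | hlt
    · simp
    · simp [jacobiCoeff_eq_zero_of_lt a b hlt]

noncomputable def jacobiPoly (n : ℕ) (a b : ℝ) : ℝ[X] :=
  ∑ k ∈ range (n + 1), C (jacobiCoeff n a b k) * X ^ k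

lemma coeff_jacobiPoly (n : ℕ) (a b : ℝ) (k : ℕ) :
    (jacobiPoly n a b).coeff k = jacobiCoeff n a b k := by
  simp only [jacobiPoly, finsetSum_coeff, coeff_C_mul_X_pow, sum_ite_eq, mem_range]
  split_ifs with hk
  · rfl
  · exact (jacobiCoeff_eq_zero_of_lt a b (by omega)).symm

lemma jacobiP_eq_eval (n : ℕ) (a b x : ℝ) :
    jacobiP n a b x = (jacobiPoly n a b).eval ((x - 1) / 2) := by
  simp only [jacobiP, jacobiPoly, eval_finsetSum, eval_mul, eval_C, eval_pow, eval_X, mul_sum]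
  exact sum_congr rfl fun k _ => by unfold jacobiCoeff; ring

theorem jacobiPoly_ode (n : ℕ) (a b : ℝ) :
    X * (X + 1) * derivative (derivative (jacobiPoly n a b))
      + (C (a + 1) + C (a + b + 2) * X) * derivative (jacobiPoly n a b)
      = C (n * (n + a + b + 1)) * jacobiPoly n a b := by
  ext k
  have hrec := jacobiCoeff_succ n a b k
  rcases k with _ | _ | k <;>
    simp only [coeff_add, coeff_C_mul, mul_add, add_mul, mul_assoc, coeff_X_mul, coeff_X_mul_zero,
      coeff_derivative, coeff_jacobiPoly, one_mul] at hrec ⊢ <;>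
    push_cast at hrec ⊢ <;>
    linear_combination hrec

lemma deriv_eval_sub_const (p : ℝ[X]) (c : ℝ) :
    deriv (fun w => p.eval (w - c)) = fun w => p.derivative.eval (w - c) :=
  funext fun w => (deriv_comp_sub_const (fun t => p.eval t) c w).trans (Polynomial.deriv p)

lemma shiftedJacobi_eq_eval (n : ℕ) (a b : ℝ) :
    shiftedJacobi n a b = fun w => (jacobiPoly n a b).eval (w - 1) :=
  funext fun w => by rw [shiftedJacobi, jacobiP_eq_eval]; ring_nf

theorem shiftedJacobi_ode (n : ℕ) (a b w : ℝ) :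
    w * (1 - w) * deriv (deriv (shiftedJacobi n a b)) w
      + ((b + 1) * (1 - w) - (a + 1) * w) * deriv (shiftedJacobi n a b) w
      + n * (n + a + b + 1) * shiftedJacobi n a b w = 0 := by
  have hode := congrArg (eval (w - 1)) (jacobiPoly_ode n a b)
  simp only [eval_add, eval_mul, eval_X, eval_C, eval_one] at hode
  simp only [shiftedJacobi_eq_eval, deriv_eval_sub_const]
  linear_combination -hode

lemma deriv_comp_div_const (f : ℝ → ℝ) (s : ℝ) :
    deriv (fun t => f (t / s)) = fun t => deriv f (t / s) / s := by
  funext t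
  simp only [div_eq_inv_mul]
  exact (deriv_comp_mul_left s⁻¹ f t).trans (smul_eq_mul _ _)

theorem ode_comp_div_const {f u : ℝ → ℝ} {p q lam s z : ℝ} (K : ℝ) (hs : s ≠ 0)
    (hu : u = fun t => K * f (t / s))
    (hf : z / s * (1 - z / s) * deriv (deriv f) (z / s)
      + (p * (1 - z / s) - q * (z / s)) * deriv f (z / s) + lam * f (z / s) = 0) :
    z * (s - z) * deriv (deriv u) z + (p * (s - z) - q * z) * deriv u z + lam * u z = 0 := by
  subst hu
  simp only [deriv_const_mul_field', deriv_comp_div_const, deriv_div_const]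
  field_simp at hf ⊢
  linear_combination K * hf

theorem koornwinder3_pde_z (n1 n2 n3 : ℕ) (α β γ δ a b : ℝ) (x y z : ℝ) :
    z * (1 - x - y - z)
          * deriv (deriv (fun t => koornwinder3 n1 n2 n3 α β γ δ a b x y t)) z
        + ((γ + 1) * (1 - x - y - z) - (δ + 1) * z)
            * deriv (fun t => koornwinder3 n1 n2 n3 α β γ δ a b x y t) z
        + n3 * (n3 + γ + δ + 1) * koornwinder3 n1 n2 n3 α β γ δ a b x y z = 0 := by
  set s := 1 - x - y
  set K := jacobiP n1 (β + γ + δ + a + b + 2 * n2 + 2 * n3 + 2) α (2 * x - 1) * (1 - x) ^ n2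
    * jacobiP n2 (γ + δ + 2 * n3 + b + 1) β (2 * y / (1 - x) - 1) * s ^ n3 with hK
  have hu : (fun t => koornwinder3 n1 n2 n3 α β γ δ a b x y t)
      = fun t => K * shiftedJacobi n3 δ γ (t / s) := by
    funext t
    rw [koornwinder3, shiftedJacobi, ← mul_div_assoc]
  rcases eq_or_ne s 0 with hs | hs
  · -- `t / 0 = 0` makes the function constant in `t`, and `s ^ n3` vanishes unless `n3 = 0`
    simp only [hu, hs, div_zero, deriv_const', mul_zero, zero_add]
    rcases n3 with _ | n3 <;> simp [hK, hs]
  · have hode := shiftedJacobi_ode n3 δ γ (z / s)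
    rw [add_right_comm (n3 : ℝ) δ γ] at hode
    exact ode_comp_div_const K hs hu hode
end
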